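/- arXiv:1208.3725 — 6 statements merged into one kernel-verified Lean document; each statement's English description precedes it below -/
import Mathlib

section
/- Let E be a uniformly convex and smooth Banach space and let {xₙ}, {yₙ} be sequences in E such that φ(xₙ, yₙ) → 0 and either {xₙ} or {yₙ} is bounded. Then ‖xₙ − yₙ‖ → 0. -/
/-!
Bound both sequences by `r` (possible since `(‖x‖ - ‖y‖)² ≤ φ(x, y)`). Uniform convexity, applied
after rescaling by `m = max ‖x‖ ‖y‖`, gives `‖x + y‖ ≤ (2 - δ) m` whenever `‖x - y‖ ≥ ε`; testing
`J y` on `x + y` turns this into `φ(x, y) ≥ δ ε² / 2 - 6 r |‖x‖ - ‖y‖|`. Both `φ(xₙ, yₙ)` and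
`‖xₙ‖ - ‖yₙ‖` tend to `0`, so eventually `‖xₙ - yₙ‖ < ε`.
-/

open Filter Topology

theorem norm_sub_le_two_mul_max {E : Type*} [SeminormedAddCommGroup E] (x y : E) :
    ‖x - y‖ ≤ 2 * max ‖x‖ ‖y‖ := by
  linarith [norm_sub_le x y, le_max_left ‖x‖ ‖y‖, le_max_right ‖x‖ ‖y‖]

theorem exists_norm_add_le_two_sub_mul_max {E : Type*} [SeminormedAddCommGroup E]
    [NormedSpace ℝ E] [UniformConvexSpace E] {ε r : ℝ} (hε : 0 < ε) (hr : 0 < r) :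
    ∃ δ > 0, ∀ x y : E, ‖x‖ ≤ r → ‖y‖ ≤ r → ε ≤ ‖x - y‖ →
      ‖x + y‖ ≤ (2 - δ) * max ‖x‖ ‖y‖ := by
  obtain ⟨δ, hδ, h⟩ := exists_forall_closed_ball_dist_add_le_two_sub E (div_pos hε hr)
  refine ⟨δ, hδ, fun x y hx hy hxy => ?_⟩
  set m := max ‖x‖ ‖y‖
  have hm : 0 < m := by linarith [hxy.trans (norm_sub_le_two_mul_max x y)]
  have hscale : ∀ z : E, ‖m⁻¹ • z‖ = ‖z‖ / m := fun z => by
    rw [norm_smul_of_nonneg (inv_nonneg.2 hm.le), inv_mul_eq_div]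
  have hsub : ε / r ≤ ‖m⁻¹ • x - m⁻¹ • y‖ := by
    rw [← smul_sub, hscale]
    calc ε / r ≤ ε / m := div_le_div_of_nonneg_left hε.le hm (max_le hx hy)
      _ ≤ ‖x - y‖ / m := by gcongr
  have hunit := h (by rw [hscale, div_le_one hm]; exact le_max_left _ _)
    (by rw [hscale, div_le_one hm]; exact le_max_right _ _) hsub
  rwa [← smul_add, hscale, div_le_iff₀ hm] at hunit

section Lyapunov

variable {E : Type*} [SeminormedAddCommGroup E] [NormedSpace ℝ E] (J : E → E →L[ℝ] ℝ)

def lyapunov (x y : E) : ℝ := ‖x‖ ^ 2 - 2 * J y x + ‖y‖ ^ 2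

variable {J}

theorem apply_le_norm_mul_norm (hJ : ∀ x, ‖J x‖ = ‖x‖) (x y : E) : J y x ≤ ‖y‖ * ‖x‖ :=
  calc J y x ≤ ‖J y x‖ := le_abs_self _
    _ ≤ ‖J y‖ * ‖x‖ := (J y).le_opNorm x
    _ = ‖y‖ * ‖x‖ := by rw [hJ]

theorem sq_norm_sub_norm_le_lyapunov (hJ : ∀ x, ‖J x‖ = ‖x‖) (x y : E) :
    (‖x‖ - ‖y‖) ^ 2 ≤ lyapunov J x y := by
  have := apply_le_norm_mul_norm hJ x y
  unfold lyapunov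
  nlinarith

theorem tendsto_norm_sub_norm_of_lyapunov (hJ : ∀ x, ‖J x‖ = ‖x‖) {x y : ℕ → E}
    (h : Tendsto (fun n => lyapunov J (x n) (y n)) atTop (𝓝 0)) :
    Tendsto (fun n => ‖x n‖ - ‖y n‖) atTop (𝓝 0) := by
  have hsqrt : Tendsto (fun n => √(lyapunov J (x n) (y n))) atTop (𝓝 0) := by
    simpa using h.sqrt
  refine squeeze_zero_norm (fun n => ?_) hsqrt
  rw [Real.norm_eq_abs, ← Real.sqrt_sq_eq_abs]
  exact Real.sqrt_le_sqrt (sq_norm_sub_norm_le_lyapunov hJ _ _)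

theorem lyapunov_ge_of_norm_add_le (hJ₁ : ∀ x, J x x = ‖x‖ ^ 2) (hJ₂ : ∀ x, ‖J x‖ = ‖x‖)
    {x y : E} {δ : ℝ} (hadd : ‖x + y‖ ≤ (2 - δ) * max ‖x‖ ‖y‖) :
    2 * δ * ‖y‖ * max ‖x‖ ‖y‖ - 2 * max ‖x‖ ‖y‖ * |‖x‖ - ‖y‖| ≤ lyapunov J x y := by
  have htest : J y x + ‖y‖ ^ 2 ≤ ‖y‖ * ((2 - δ) * max ‖x‖ ‖y‖) := by
    rw [← hJ₁, ← map_add]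
    exact (apply_le_norm_mul_norm hJ₂ _ _).trans (by gcongr)
  unfold lyapunov
  rcases le_total ‖x‖ ‖y‖ with hxy | hyx
  · rw [max_eq_right hxy] at htest ⊢
    rw [abs_of_nonpos (sub_nonpos.2 hxy)]
    nlinarith [norm_nonneg x]
  · rw [max_eq_left hyx] at htest ⊢
    rw [abs_of_nonneg (sub_nonneg.2 hyx)]
    nlinarith [norm_nonneg y]

theorem exists_pos_le_lyapunov_add_mul_abs_norm_sub_norm [UniformConvexSpace E]
    (hJ₁ : ∀ x, J x x = ‖x‖ ^ 2) (hJ₂ : ∀ x, ‖J x‖ = ‖x‖) {ε r : ℝ} (hε : 0 < ε) (hr : 0 < r) :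
    ∃ c > 0, ∀ x y : E, ‖x‖ ≤ r → ‖y‖ ≤ r → ε ≤ ‖x - y‖ →
      c ≤ lyapunov J x y + 6 * r * |‖x‖ - ‖y‖| := by
  obtain ⟨δ, hδ, h⟩ := exists_norm_add_le_two_sub_mul_max (E := E) hε hr
  refine ⟨δ * ε ^ 2 / 2, by positivity, fun x y hx hy hxy => ?_⟩
  have hadd := h x y hx hy hxy
  have hbound := lyapunov_ge_of_norm_add_le hJ₁ hJ₂ hadd
  set m := max ‖x‖ ‖y‖
  set d := |‖x‖ - ‖y‖|
  have hmr : m ≤ r := max_le hx hy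
  have hεm : ε ≤ 2 * m := hxy.trans (norm_sub_le_two_mul_max x y)
  -- `δ ≤ 2` because `‖x + y‖ ≥ 0`.
  have hδm : δ * m ≤ 2 * m := by nlinarith [norm_nonneg (x + y)]
  have hd : 0 ≤ d := abs_nonneg _
  have hym : m ≤ ‖y‖ + d :=
    max_le (by linarith [le_abs_self (‖x‖ - ‖y‖)]) (by linarith)
  have hm : 0 ≤ m := (norm_nonneg x).trans (le_max_left _ _)
  have h₁ := mul_le_mul_of_nonneg_left hym (by positivity : 0 ≤ 2 * δ * m)
  have h₂ := mul_le_mul_of_nonneg_right hδm hd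
  have h₃ := mul_le_mul_of_nonneg_right hmr hd
  have h₄ := mul_le_mul_of_nonneg_left (pow_le_pow_left₀ hε.le hεm 2) hδ.le
  linarith

end Lyapunov

theorem exists_forall_norm_le_of_tendsto_norm_sub_norm {E : Type*} [SeminormedAddCommGroup E]
    {x y : ℕ → E} (hbdd : Bornology.IsBounded (Set.range x) ∨ Bornology.IsBounded (Set.range y))
    (h : Tendsto (fun n => ‖x n‖ - ‖y n‖) atTop (𝓝 0)) :
    ∃ r > 0, ∀ n, ‖x n‖ ≤ r ∧ ‖y n‖ ≤ r := by
  obtain ⟨C, hC⟩ := (Metric.isBounded_range_of_tendsto _ h).exists_norm_le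
  have hgap : ∀ n, |‖x n‖ - ‖y n‖| ≤ C := fun n => hC _ ⟨n, rfl⟩
  have hC0 : 0 ≤ C := (abs_nonneg _).trans (hgap 0)
  rcases hbdd with hb | hb <;> obtain ⟨B, hB⟩ := hb.exists_norm_le <;>
  · refine ⟨max B 0 + C + 1, by positivity, fun n => ?_⟩
    have := hB _ ⟨n, rfl⟩
    have := abs_le.1 (hgap n)
    constructor <;> linarith [le_max_left B 0]

theorem tendsto_sub_of_lyapunov_tendsto_zero_general
    {E : Type*} [NormedAddCommGroup E] [NormedSpace ℝ E]
    [UniformConvexSpace E]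
    (J : E → (E →L[ℝ] ℝ))
    (hJ1 : ∀ x : E, J x x = ‖x‖ ^ 2)
    (hJ2 : ∀ x : E, ‖J x‖ = ‖x‖)
    (φ : E → E → ℝ)
    (hφ : ∀ x y : E, φ x y = ‖x‖ ^ 2 - 2 * (J y x) + ‖y‖ ^ 2)
    (x y : ℕ → E)
    (hphi : Tendsto (fun n => φ (x n) (y n)) atTop (nhds 0))
    (hbdd : Bornology.IsBounded (Set.range x) ∨ Bornology.IsBounded (Set.range y)) :
    Tendsto (fun n => ‖x n - y n‖) atTop (nhds 0) := by
  obtain rfl : φ = lyapunov J := funext₂ hφ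
  have hgap := tendsto_norm_sub_norm_of_lyapunov hJ2 hphi
  obtain ⟨r, hr, hxy⟩ := exists_forall_norm_le_of_tendsto_norm_sub_norm hbdd hgap
  refine tendsto_order.2 ⟨fun a ha => .of_forall fun n => ha.trans_le (norm_nonneg _),
    fun ε hε => ?_⟩
  obtain ⟨c, hc, hkey⟩ := exists_pos_le_lyapunov_add_mul_abs_norm_sub_norm hJ1 hJ2 hε hr
  have hsmall : Tendsto (fun n => lyapunov J (x n) (y n) + 6 * r * |‖x n‖ - ‖y n‖|)
      atTop (𝓝 0) := by
    simpa using hphi.add (hgap.abs.const_mul (6 * r))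
  filter_upwards [hsmall.eventually (gt_mem_nhds hc)] with n hn
  by_contra! hfar
  exact (hkey _ _ (hxy n).1 (hxy n).2 hfar).not_gt hn

/-- Kamimura–Takahashi: in a uniformly convex and smooth Banach space, if
`φ(xₙ, yₙ) → 0` and `{xₙ}` or `{yₙ}` is bounded, then `‖xₙ − yₙ‖ → 0`. -/
theorem tendsto_sub_of_lyapunov_tendsto_zero
    {E : Type*} [NormedAddCommGroup E] [NormedSpace ℝ E] [CompleteSpace E]
    [UniformConvexSpace E]
    (J : E → (E →L[ℝ] ℝ))
    (hJ1 : ∀ x : E, J x x = ‖x‖ ^ 2)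
    (hJ2 : ∀ x : E, ‖J x‖ = ‖x‖)
    (φ : E → E → ℝ)
    (hφ : ∀ x y : E, φ x y = ‖x‖ ^ 2 - 2 * (J y x) + ‖y‖ ^ 2)
    (x y : ℕ → E)
    (hphi : Tendsto (fun n => φ (x n) (y n)) atTop (nhds 0))
    (hbdd : Bornology.IsBounded (Set.range x) ∨ Bornology.IsBounded (Set.range y)) :
    Tendsto (fun n => ‖x n - y n‖) atTop (nhds 0) :=
  tendsto_sub_of_lyapunov_tendsto_zero_general J hJ1 hJ2 φ hφ x y hphi hbdd
end

section
/- Let C, E, F, r be as in the resolvent setting and define S_r : E → C by S_r x = {z ∈ C : F(z,y) + (1/r)⟨y − z, Jz − Jx⟩ ≥ 0 for all y ∈ C}. Then S_r is single-valued. -/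
open Set Filter

/-! Adding the defining inequalities of `z₁, z₂ ∈ S_r x` at `y = z₂` and `y = z₁` and using the
monotonicity of `F` gives `⟨z₁ - z₂, Jz₁ - Jz₂⟩ ≤ 0`; on a strictly convex space the duality map
is strictly monotone, so `z₁ = z₂`. -/

section DualityMap

variable {E : Type*} [NormedAddCommGroup E] [NormedSpace ℝ E] {J : E → (E →L[ℝ] ℝ)}

theorem dualityMap_apply_le (hJ : ∀ x, ‖J x‖ ≤ ‖x‖) (a b : E) : J a b ≤ ‖a‖ * ‖b‖ :=
  calc J a b ≤ ‖J a b‖ := le_abs_self _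
    _ ≤ ‖J a‖ * ‖b‖ := (J a).le_opNorm b
    _ ≤ ‖a‖ * ‖b‖ := by gcongr; exact hJ a

/-- From `⟨a - b, Ja - Jb⟩ ≤ 0` one gets `‖a‖ = ‖b‖` and
`J a b = ‖a‖²`, so `J a` norms `a + b` at `2‖a‖`; strict convexity then forces `a = b`. -/
theorem eq_of_dualityMap_sub_apply_sub_nonpos [StrictConvexSpace ℝ E]
    (hJsq : ∀ x, J x x = ‖x‖ ^ 2) (hJ : ∀ x, ‖J x‖ ≤ ‖x‖) {a b : E}
    (hab : (J a - J b) (a - b) ≤ 0) : a = b := by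
  have hcross : ‖a‖ ^ 2 + ‖b‖ ^ 2 ≤ J a b + J b a := by
    simp only [sub_apply, map_sub, hJsq] at hab
    linarith
  have hab_le := dualityMap_apply_le hJ a b
  have hba_le := dualityMap_apply_le hJ b a
  have hnorm : ‖a‖ = ‖b‖ := by nlinarith [sq_nonneg (‖a‖ - ‖b‖)]
  have hJab : J a b = ‖a‖ ^ 2 := by nlinarith
  refine eq_of_norm_eq_of_norm_add_eq hnorm (le_antisymm (norm_add_le a b) ?_)
  rcases (norm_nonneg a).eq_or_lt with ha | ha
  · rw [← hnorm, ← ha, add_zero]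
    exact norm_nonneg _
  · refine le_of_mul_le_mul_left ?_ ha
    calc ‖a‖ * (‖a‖ + ‖b‖) = J a (a + b) := by rw [map_add, hJsq, hJab, hnorm]; ring
      _ ≤ ‖a‖ * ‖a + b‖ := dualityMap_apply_le hJ a (a + b)

/-- The set `S_r x` of the paper. -/
def equilibriumResolvent (J : E → (E →L[ℝ] ℝ)) (C : Set E) (F : E → E → ℝ) (r : ℝ) (x : E) :
    Set E :=
  {z ∈ C | ∀ y ∈ C, F z y + (1 / r) * ((J z - J x) (y - z)) ≥ 0}

theorem dualityMap_sub_apply_sub_nonpos_of_mem_equilibriumResolvent {C : Set E}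
    {F : E → E → ℝ} (hF : ∀ x ∈ C, ∀ y ∈ C, F x y + F y x ≤ 0) {r : ℝ} (hr : 0 < r)
    {x z₁ z₂ : E} (h₁ : z₁ ∈ equilibriumResolvent J C F r x)
    (h₂ : z₂ ∈ equilibriumResolvent J C F r x) : (J z₁ - J z₂) (z₁ - z₂) ≤ 0 := by
  have h₁₂ := h₁.2 z₂ h₂.1
  have h₂₁ := h₂.2 z₁ h₁.1
  have hF₁₂ := hF z₁ h₁.1 z₂ h₂.1
  have hsum : (1 / r) * (J z₁ - J z₂) (z₁ - z₂) ≤ 0 := by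
    have hsplit : (J z₁ - J z₂) (z₁ - z₂) =
        -((J z₁ - J x) (z₂ - z₁) + (J z₂ - J x) (z₁ - z₂)) := by
      simp only [sub_apply, map_sub]
      ring
    rw [hsplit]
    linarith
  exact nonpos_of_mul_nonpos_right hsum (by positivity)

theorem equilibriumResolvent_subsingleton [StrictConvexSpace ℝ E]
    (hJsq : ∀ x, J x x = ‖x‖ ^ 2) (hJ : ∀ x, ‖J x‖ ≤ ‖x‖) {C : Set E} {F : E → E → ℝ}
    (hF : ∀ x ∈ C, ∀ y ∈ C, F x y + F y x ≤ 0) {r : ℝ} (hr : 0 < r) (x : E) :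
    (equilibriumResolvent J C F r x).Subsingleton := fun _ h₁ _ h₂ =>
  eq_of_dualityMap_sub_apply_sub_nonpos hJsq hJ
    (dualityMap_sub_apply_sub_nonpos_of_mem_equilibriumResolvent hF hr h₁ h₂)

end DualityMap

theorem equilibrium_resolvent_single_valued_general
    {E : Type*} [NormedAddCommGroup E] [NormedSpace ℝ E]
    [StrictConvexSpace ℝ E]
    (J : E → (E →L[ℝ] ℝ))
    (hJ1 : ∀ x : E, J x x = ‖x‖ ^ 2)
    (hJ2 : ∀ x : E, ‖J x‖ = ‖x‖)
    (C : Set E)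
    (F : E → E → ℝ)
    (hA2 : ∀ x ∈ C, ∀ y ∈ C, F x y + F y x ≤ 0)
    (r : ℝ) (hr : 0 < r) (x : E) (z₁ z₂ : E)
    (hz₁ : z₁ ∈ C ∧ ∀ y ∈ C, F z₁ y + (1 / r) * ((J z₁ - J x) (y - z₁)) ≥ 0)
    (hz₂ : z₂ ∈ C ∧ ∀ y ∈ C, F z₂ y + (1 / r) * ((J z₂ - J x) (y - z₂)) ≥ 0) :
    z₁ = z₂ :=
  equilibriumResolvent_subsingleton hJ1 (fun y => (hJ2 y).le) hA2 hr x hz₁ hz₂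

/-- The resolvent `S_r` is single-valued: for each `x ∈ E` there is at most one
`z ∈ C` with `F(z,y) + (1/r)⟨y − z, Jz − Jx⟩ ≥ 0` for all `y ∈ C`. -/
theorem equilibrium_resolvent_single_valued
    {E : Type*} [NormedAddCommGroup E] [NormedSpace ℝ E] [CompleteSpace E]
    [StrictConvexSpace ℝ E]
    (hrefl : Function.Surjective (NormedSpace.inclusionInDoubleDual ℝ E))
    (J : E → (E →L[ℝ] ℝ))
    (hJ1 : ∀ x : E, J x x = ‖x‖ ^ 2)
    (hJ2 : ∀ x : E, ‖J x‖ = ‖x‖)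
    (C : Set E) (hC : C.Nonempty) (hCc : IsClosed C) (hCv : Convex ℝ C)
    (F : E → E → ℝ)
    (hA1 : ∀ x ∈ C, F x x = 0)
    (hA2 : ∀ x ∈ C, ∀ y ∈ C, F x y + F y x ≤ 0)
    (hA3 : ∀ x ∈ C, ∀ y ∈ C, ∀ z ∈ C,
      Filter.limsup (fun t : ℝ => F (t • z + (1 - t) • x) y) (nhdsWithin 0 (Ioi 0))
        ≤ F x y)
    (hA4 : ∀ x ∈ C, ConvexOn ℝ C (F x) ∧ LowerSemicontinuousOn (F x) C)
    (r : ℝ) (hr : 0 < r) (x : E) (z₁ z₂ : E)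
    (hz₁ : z₁ ∈ C ∧ ∀ y ∈ C, F z₁ y + (1 / r) * ((J z₁ - J x) (y - z₁)) ≥ 0)
    (hz₂ : z₂ ∈ C ∧ ∀ y ∈ C, F z₂ y + (1 / r) * ((J z₂ - J x) (y - z₂)) ≥ 0) :
    z₁ = z₂ :=
  equilibrium_resolvent_single_valued_general J hJ1 hJ2 C F hA2 r hr x z₁ z₂ hz₁ hz₂
end

section
/- The resolvent S_r is a firmly nonexpansive-type mapping: for any x, y ∈ E, ⟨S_r x − S_r y, J(S_r x) − J(S_r y)⟩ ≤ ⟨S_r x − S_r y, Jx − Jy⟩. -/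
open Set Filter

lemma pairing_sub_le_of_resolvent_inequalities {E : Type*} [NormedAddCommGroup E]
    [NormedSpace ℝ E] (J : E → E →L[ℝ] ℝ) (F : E → E → ℝ) {r : ℝ} (hr : 0 < r) {x y u v : E}
    (hmono : F u v + F v u ≤ 0)
    (hu : F u v + (1 / r) * ((J u - J x) (v - u)) ≥ 0)
    (hv : F v u + (1 / r) * ((J v - J y) (u - v)) ≥ 0) :
    (J u - J v) (u - v) ≤ (J x - J y) (u - v) := by
  have hsum : 0 ≤ (1 / r) * ((J u - J x) (v - u) + (J v - J y) (u - v)) := by linarith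
  have hpair : 0 ≤ (J u - J x) (v - u) + (J v - J y) (u - v) :=
    nonneg_of_mul_nonneg_right (by linarith) (one_div_pos.mpr hr)
  have hswap : (J u - J x) (v - u) = -(J u - J x) (u - v) := by
    rw [← map_neg, neg_sub]
  simp only [hswap, sub_apply] at hpair ⊢
  linarith

theorem equilibrium_resolvent_firmly_nonexpansive_type_general
    {E : Type*} [NormedAddCommGroup E] [NormedSpace ℝ E]
    (J : E → (E →L[ℝ] ℝ))
    (C : Set E)
    (F : E → E → ℝ)
    (hA2 : ∀ x ∈ C, ∀ y ∈ C, F x y + F y x ≤ 0)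
    (r : ℝ) (hr : 0 < r)
    (S : E → E)
    (hS : ∀ x : E, S x ∈ C ∧
      ∀ y ∈ C, F (S x) y + (1 / r) * ((J (S x) - J x) (y - S x)) ≥ 0)
    (x y : E) :
    (J (S x) - J (S y)) (S x - S y) ≤ (J x - J y) (S x - S y) := by
  obtain ⟨hxC, hx⟩ := hS x
  obtain ⟨hyC, hy⟩ := hS y
  exact pairing_sub_le_of_resolvent_inequalities J F hr (hA2 (S x) hxC (S y) hyC)
    (hx (S y) hyC) (hy (S x) hxC)

/-- The resolvent is firmly nonexpansive-type:
`⟨S_r x − S_r y, J(S_r x) − J(S_r y)⟩ ≤ ⟨S_r x − S_r y, Jx − Jy⟩`. -/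
theorem equilibrium_resolvent_firmly_nonexpansive_type
    {E : Type*} [NormedAddCommGroup E] [NormedSpace ℝ E] [CompleteSpace E]
    [StrictConvexSpace ℝ E]
    (hrefl : Function.Surjective (NormedSpace.inclusionInDoubleDual ℝ E))
    (J : E → (E →L[ℝ] ℝ))
    (hJ1 : ∀ x : E, J x x = ‖x‖ ^ 2)
    (hJ2 : ∀ x : E, ‖J x‖ = ‖x‖)
    (C : Set E) (hC : C.Nonempty) (hCc : IsClosed C) (hCv : Convex ℝ C)
    (F : E → E → ℝ)
    (hA1 : ∀ x ∈ C, F x x = 0)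
    (hA2 : ∀ x ∈ C, ∀ y ∈ C, F x y + F y x ≤ 0)
    (hA3 : ∀ x ∈ C, ∀ y ∈ C, ∀ z ∈ C,
      Filter.limsup (fun t : ℝ => F (t • z + (1 - t) • x) y) (nhdsWithin 0 (Ioi 0))
        ≤ F x y)
    (hA4 : ∀ x ∈ C, ConvexOn ℝ C (F x) ∧ LowerSemicontinuousOn (F x) C)
    (r : ℝ) (hr : 0 < r)
    (S : E → E)
    (hS : ∀ x : E, S x ∈ C ∧
      ∀ y ∈ C, F (S x) y + (1 / r) * ((J (S x) - J x) (y - S x)) ≥ 0)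
    (x y : E) :
    (J (S x) - J (S y)) (S x - S y) ≤ (J x - J y) (S x - S y) :=
  equilibrium_resolvent_firmly_nonexpansive_type_general J C F hA2 r hr S hS x y
end

section
/- The fixed point set of the resolvent S_r equals the solution set of the equilibrium problem: F(S_r) = EP(F) = {x̂ ∈ C : F(x̂, y) ≥ 0 for all y ∈ C}, and moreover EP(F) is closed and convex. -/
/-!
A fixed point `x = S_r x` makes the penalty term in the defining inequality of `S_r x` vanish,
so `x ∈ EP(F)`. Conversely, for `x ∈ EP(F)` and `z = S_r x`, monotonicity (A2) turns the
inequality at `y = x` into `(Jz - Jx)(z - x) ≤ 0`; since `(Jz - Jx)(z - x) ≥ (‖z‖ - ‖x‖)²`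
this forces `‖z‖ = ‖x‖` and `Jz x = ‖z‖²`, and strict convexity then gives `z = x`.

By (A2) every solution of the equilibrium problem solves the dual (Minty) problem
`F y x ≤ 0` for all `y ∈ C`; conversely, convexity (A4) and (A1) give `F x_t y ≥ 0` along the
segment `x_t = t y + (1 - t) x`, and hemicontinuity (A3) passes to `t → 0⁺`. The Minty
formulation exhibits `EP(F)` as an intersection of sublevel sets of the convex, lower
semicontinuous functions `F y`, which are closed and convex.
-/

open Set Filter Topology

def equilibriumSet {E : Type*} (C : Set E) (F : E → E → ℝ) : Set E :=
  {x ∈ C | ∀ y ∈ C, 0 ≤ F x y}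

lemma Real.limsup_nonneg_of_eventually_nonneg {α : Type*} {f : Filter α} [f.NeBot]
    {u : α → ℝ} (h : ∀ᶠ a in f, 0 ≤ u a) : 0 ≤ limsup u f := by
  rw [limsup_eq]
  refine Real.sInf_nonneg fun b hb => ?_
  obtain ⟨a, hua, hub⟩ := (h.and hb).exists
  exact hua.trans hub

section Duality

variable {E : Type*} [NormedAddCommGroup E] [NormedSpace ℝ E] {J : E → E →L[ℝ] ℝ}

lemma duality_apply_le (hJ2 : ∀ x, ‖J x‖ = ‖x‖) (x y : E) : J x y ≤ ‖x‖ * ‖y‖ :=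
  calc J x y ≤ ‖J x y‖ := Real.le_norm_self _
    _ ≤ ‖J x‖ * ‖y‖ := (J x).le_opNorm y
    _ = ‖x‖ * ‖y‖ := by rw [hJ2]

lemma duality_sub_apply_sub_eq (hJ1 : ∀ x, J x x = ‖x‖ ^ 2) (x y : E) :
    (J x - J y) (x - y) = ‖x‖ ^ 2 + ‖y‖ ^ 2 - J x y - J y x := by
  simp only [sub_apply, map_sub, hJ1]
  ring

lemma sq_norm_sub_norm_le_duality_apply_sub (hJ1 : ∀ x, J x x = ‖x‖ ^ 2)
    (hJ2 : ∀ x, ‖J x‖ = ‖x‖) (x y : E) : (‖x‖ - ‖y‖) ^ 2 ≤ (J x - J y) (x - y) := by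
  rw [duality_sub_apply_sub_eq hJ1]
  linarith [duality_apply_le hJ2 x y, duality_apply_le hJ2 y x]

lemma eq_of_norm_eq_of_duality_apply_eq [StrictConvexSpace ℝ E]
    (hJ1 : ∀ x, J x x = ‖x‖ ^ 2) (hJ2 : ∀ x, ‖J x‖ = ‖x‖) {x y : E}
    (hnorm : ‖x‖ = ‖y‖) (hxy : J x y = ‖x‖ ^ 2) : x = y := by
  rcases eq_or_ne x 0 with rfl | hx
  · exact (norm_eq_zero.mp (hnorm.symm.trans norm_zero)).symm
  by_contra hne
  have hmid : ‖(1 / 2 : ℝ) • (x + y)‖ < ‖x‖ := (norm_midpoint_lt_iff hnorm).mpr hne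
  have hJmid : J x ((1 / 2 : ℝ) • (x + y)) = ‖x‖ ^ 2 := by
    rw [map_smul, map_add, hJ1, hxy, smul_eq_mul]
    ring
  have hle := duality_apply_le hJ2 x ((1 / 2 : ℝ) • (x + y))
  rw [hJmid] at hle
  nlinarith [norm_pos_iff.mpr hx]

lemma eq_of_duality_apply_sub_nonpos [StrictConvexSpace ℝ E]
    (hJ1 : ∀ x, J x x = ‖x‖ ^ 2) (hJ2 : ∀ x, ‖J x‖ = ‖x‖) {x y : E}
    (h : (J x - J y) (x - y) ≤ 0) : x = y := by
  have hnorm : ‖x‖ = ‖y‖ := by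
    nlinarith [sq_norm_sub_norm_le_duality_apply_sub hJ1 hJ2 x y, sq_nonneg (‖x‖ - ‖y‖)]
  refine eq_of_norm_eq_of_duality_apply_eq hJ1 hJ2 hnorm ?_
  rw [duality_sub_apply_sub_eq hJ1] at h
  have hyx := duality_apply_le hJ2 y x
  have hxy := duality_apply_le hJ2 x y
  rw [← hnorm] at h hyx hxy
  nlinarith

end Duality

section Minty

variable {E : Type*} [AddCommGroup E] [Module ℝ E] {C : Set E} {F : E → E → ℝ}

lemma nonneg_apply_segment_of_minty (hCv : Convex ℝ C) (hA1 : ∀ x ∈ C, F x x = 0)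
    (hconv : ∀ x ∈ C, ConvexOn ℝ C (F x)) {x y : E} (hx : x ∈ C) (hy : y ∈ C)
    (hminty : ∀ w ∈ C, F w x ≤ 0) {t : ℝ} (ht : t ∈ Ioc 0 1) :
    0 ≤ F (t • y + (1 - t) • x) y := by
  set xt := t • y + (1 - t) • x
  have hxt : xt ∈ C := hCv hy hx ht.1.le (sub_nonneg.mpr ht.2) (by ring)
  -- `0 = F xt xt ≤ t F xt y + (1 - t) F xt x ≤ t F xt y`
  have hle : F xt xt ≤ t * F xt y + (1 - t) * F xt x :=
    (hconv xt hxt).2 hy hx ht.1.le (sub_nonneg.mpr ht.2) (by ring)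
  rw [hA1 xt hxt] at hle
  have hx' : (1 - t) * F xt x ≤ 0 :=
    mul_nonpos_of_nonneg_of_nonpos (sub_nonneg.mpr ht.2) (hminty xt hxt)
  exact nonneg_of_mul_nonneg_right (by linarith) ht.1

theorem equilibriumSet_eq_inter_biInter (hCv : Convex ℝ C) (hA1 : ∀ x ∈ C, F x x = 0)
    (hA2 : ∀ x ∈ C, ∀ y ∈ C, F x y + F y x ≤ 0)
    (hA3 : ∀ x ∈ C, ∀ y ∈ C, ∀ z ∈ C,
      limsup (fun t : ℝ => F (t • z + (1 - t) • x) y) (𝓝[>] 0) ≤ F x y)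
    (hconv : ∀ x ∈ C, ConvexOn ℝ C (F x)) :
    equilibriumSet C F = C ∩ ⋂ y ∈ C, {x ∈ C | F y x ≤ 0} := by
  ext x
  simp only [equilibriumSet, mem_inter_iff, mem_iInter, mem_ofPred_eq]
  refine ⟨fun ⟨hx, h⟩ => ⟨hx, fun y hy => ⟨hx, ?_⟩⟩, fun ⟨hx, h⟩ => ⟨hx, fun y hy => ?_⟩⟩
  · linarith [hA2 x hx y hy, h y hy]
  · have hminty : ∀ w ∈ C, F w x ≤ 0 := fun w hw => (h w hw).2
    refine (Real.limsup_nonneg_of_eventually_nonneg ?_).trans (hA3 x hx y hy y hy)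
    filter_upwards [Ioc_mem_nhdsGT one_pos] with t ht
    exact nonneg_apply_segment_of_minty hCv hA1 hconv hx hy hminty ht

end Minty

section Resolvent

variable {E : Type*} [NormedAddCommGroup E] [NormedSpace ℝ E] {J : E → E →L[ℝ] ℝ}
  {C : Set E} {F : E → E → ℝ} {r : ℝ} {S : E → E}

lemma mem_equilibriumSet_of_resolvent_eq_self
    (hS : ∀ x, S x ∈ C ∧ ∀ y ∈ C, F (S x) y + (1 / r) * ((J (S x) - J x) (y - S x)) ≥ 0)
    {x : E} (hx : S x = x) : x ∈ equilibriumSet C F := by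
  refine ⟨hx ▸ (hS x).1, fun y hy => ?_⟩
  simpa [hx] using (hS x).2 y hy

lemma resolvent_eq_self_of_mem_equilibriumSet [StrictConvexSpace ℝ E]
    (hJ1 : ∀ x, J x x = ‖x‖ ^ 2) (hJ2 : ∀ x, ‖J x‖ = ‖x‖)
    (hA2 : ∀ x ∈ C, ∀ y ∈ C, F x y + F y x ≤ 0) (hr : 0 < r)
    (hS : ∀ x, S x ∈ C ∧ ∀ y ∈ C, F (S x) y + (1 / r) * ((J (S x) - J x) (y - S x)) ≥ 0)
    {x : E} (hx : x ∈ equilibriumSet C F) : S x = x := by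
  obtain ⟨hSxC, hSx⟩ := hS x
  have hFSx : F (S x) x ≤ 0 := by linarith [hA2 x hx.1 (S x) hSxC, hx.2 (S x) hSxC]
  have hpen : 0 ≤ (J (S x) - J x) (x - S x) := by
    have := hSx x hx.1
    exact nonneg_of_mul_nonneg_right (by linarith) (one_div_pos.mpr hr)
  refine eq_of_duality_apply_sub_nonpos hJ1 hJ2 ?_
  rw [← neg_sub x (S x), map_neg]
  exact neg_nonpos.mpr hpen

end Resolvent

theorem isClosed_equilibriumSet {E : Type*} [TopologicalSpace E] [AddCommGroup E] [Module ℝ E]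
    {C : Set E} {F : E → E → ℝ} (hCc : IsClosed C) (hCv : Convex ℝ C)
    (hA1 : ∀ x ∈ C, F x x = 0) (hA2 : ∀ x ∈ C, ∀ y ∈ C, F x y + F y x ≤ 0)
    (hA3 : ∀ x ∈ C, ∀ y ∈ C, ∀ z ∈ C,
      limsup (fun t : ℝ => F (t • z + (1 - t) • x) y) (𝓝[>] 0) ≤ F x y)
    (hA4 : ∀ x ∈ C, ConvexOn ℝ C (F x) ∧ LowerSemicontinuousOn (F x) C) :
    IsClosed (equilibriumSet C F) := by
  rw [equilibriumSet_eq_inter_biInter hCv hA1 hA2 hA3 fun x hx => (hA4 x hx).1]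
  refine hCc.inter (isClosed_biInter fun y hy => ?_)
  obtain ⟨v, hv, hsublevel⟩ := lowerSemicontinuousOn_iff_preimage_Iic.mp (hA4 y hy).2 0
  exact (hsublevel ▸ hCc.inter hv : IsClosed (C ∩ F y ⁻¹' Iic 0))

theorem convex_equilibriumSet {E : Type*} [AddCommGroup E] [Module ℝ E]
    {C : Set E} {F : E → E → ℝ} (hCv : Convex ℝ C)
    (hA1 : ∀ x ∈ C, F x x = 0) (hA2 : ∀ x ∈ C, ∀ y ∈ C, F x y + F y x ≤ 0)
    (hA3 : ∀ x ∈ C, ∀ y ∈ C, ∀ z ∈ C,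
      limsup (fun t : ℝ => F (t • z + (1 - t) • x) y) (𝓝[>] 0) ≤ F x y)
    (hconv : ∀ x ∈ C, ConvexOn ℝ C (F x)) :
    Convex ℝ (equilibriumSet C F) := by
  rw [equilibriumSet_eq_inter_biInter hCv hA1 hA2 hA3 hconv]
  exact hCv.inter (convex_iInter₂ fun y hy => (hconv y hy).convex_le 0)

theorem equilibrium_resolvent_fixed_points_general
    {E : Type*} [NormedAddCommGroup E] [NormedSpace ℝ E]
    [StrictConvexSpace ℝ E]
    (J : E → (E →L[ℝ] ℝ))
    (hJ1 : ∀ x : E, J x x = ‖x‖ ^ 2)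
    (hJ2 : ∀ x : E, ‖J x‖ = ‖x‖)
    (C : Set E) (hCc : IsClosed C) (hCv : Convex ℝ C)
    (F : E → E → ℝ)
    (hA1 : ∀ x ∈ C, F x x = 0)
    (hA2 : ∀ x ∈ C, ∀ y ∈ C, F x y + F y x ≤ 0)
    (hA3 : ∀ x ∈ C, ∀ y ∈ C, ∀ z ∈ C,
      Filter.limsup (fun t : ℝ => F (t • z + (1 - t) • x) y) (nhdsWithin 0 (Ioi 0))
        ≤ F x y)
    (hA4 : ∀ x ∈ C, ConvexOn ℝ C (F x) ∧ LowerSemicontinuousOn (F x) C)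
    (r : ℝ) (hr : 0 < r)
    (S : E → E)
    (hS : ∀ x : E, S x ∈ C ∧
      ∀ y ∈ C, F (S x) y + (1 / r) * ((J (S x) - J x) (y - S x)) ≥ 0) :
    {x : E | S x = x} = {x ∈ C | ∀ y ∈ C, F x y ≥ 0} ∧
      IsClosed {x ∈ C | ∀ y ∈ C, F x y ≥ 0} ∧
      Convex ℝ {x ∈ C | ∀ y ∈ C, F x y ≥ 0} := by
  refine ⟨?_, isClosed_equilibriumSet hCc hCv hA1 hA2 hA3 hA4,
    convex_equilibriumSet hCv hA1 hA2 hA3 fun x hx => (hA4 x hx).1⟩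
  ext x
  exact ⟨mem_equilibriumSet_of_resolvent_eq_self hS,
    resolvent_eq_self_of_mem_equilibriumSet hJ1 hJ2 hA2 hr hS⟩

/-- `F(S_r) = EP(F)` and `EP(F)` is closed and convex, where `EP(F)` is the
solution set of the equilibrium problem. -/
theorem equilibrium_resolvent_fixed_points
    {E : Type*} [NormedAddCommGroup E] [NormedSpace ℝ E] [CompleteSpace E]
    [StrictConvexSpace ℝ E]
    (hrefl : Function.Surjective (NormedSpace.inclusionInDoubleDual ℝ E))
    (J : E → (E →L[ℝ] ℝ))
    (hJ1 : ∀ x : E, J x x = ‖x‖ ^ 2)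
    (hJ2 : ∀ x : E, ‖J x‖ = ‖x‖)
    (C : Set E) (hC : C.Nonempty) (hCc : IsClosed C) (hCv : Convex ℝ C)
    (F : E → E → ℝ)
    (hA1 : ∀ x ∈ C, F x x = 0)
    (hA2 : ∀ x ∈ C, ∀ y ∈ C, F x y + F y x ≤ 0)
    (hA3 : ∀ x ∈ C, ∀ y ∈ C, ∀ z ∈ C,
      Filter.limsup (fun t : ℝ => F (t • z + (1 - t) • x) y) (nhdsWithin 0 (Ioi 0))
        ≤ F x y)
    (hA4 : ∀ x ∈ C, ConvexOn ℝ C (F x) ∧ LowerSemicontinuousOn (F x) C)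
    (r : ℝ) (hr : 0 < r)
    (S : E → E)
    (hS : ∀ x : E, S x ∈ C ∧
      ∀ y ∈ C, F (S x) y + (1 / r) * ((J (S x) - J x) (y - S x)) ≥ 0) :
    {x : E | S x = x} = {x ∈ C | ∀ y ∈ C, F x y ≥ 0} ∧
      IsClosed {x ∈ C | ∀ y ∈ C, F x y ≥ 0} ∧
      Convex ℝ {x ∈ C | ∀ y ∈ C, F x y ≥ 0} :=
  equilibrium_resolvent_fixed_points_general J hJ1 hJ2 C hCc hCv F hA1 hA2 hA3 hA4 r hr S hS
end

section
/- For all x ∈ E and q ∈ F(S_r), the resolvent satisfies φ(q, S_r x) + φ(S_r x, x) ≤ φ(q, x). -/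
open Set Filter

/-!
The three-point identity `φ(q, y) + φ(y, x) = φ(q, x) - 2⟪q - y, J y - J x⟫` reduces the claim to
`⟪q - S x, J (S x) - J x⟫ ≥ 0`. Adding the defining inequalities of `S x` (tested at `S z`) and of
`S z` (tested at `S x`) and using monotonicity (A2) gives
`⟪S z - S x, J (S x) - J x⟫ + ⟪S x - S z, J (S z) - J z⟫ ≥ 0`; for a fixed point `z = q` the second
term vanishes.
-/

theorem phi_add_phi_eq_sub_two_mul {E : Type*} [SeminormedAddCommGroup E] [NormedSpace ℝ E]
    {J : E → (E →L[ℝ] ℝ)} (hJ : ∀ x : E, J x x = ‖x‖ ^ 2)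
    {φ : E → E → ℝ} (hφ : ∀ x y : E, φ x y = ‖x‖ ^ 2 - 2 * (J y x) + ‖y‖ ^ 2) (q y x : E) :
    φ q y + φ y x = φ q x - 2 * (J y - J x) (q - y) := by
  simp only [hφ, sub_apply, map_sub, hJ]
  ring

theorem resolvent_dual_pairing_sum_nonneg {E : Type*} [SeminormedAddCommGroup E] [NormedSpace ℝ E]
    {J : E → (E →L[ℝ] ℝ)} {C : Set E} {F : E → E → ℝ}
    (hA2 : ∀ x ∈ C, ∀ y ∈ C, F x y + F y x ≤ 0) {r : ℝ} (hr : 0 < r) {S : E → E}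
    (hS : ∀ x : E, S x ∈ C ∧
      ∀ y ∈ C, F (S x) y + (1 / r) * ((J (S x) - J x) (y - S x)) ≥ 0) (x z : E) :
    0 ≤ (J (S x) - J x) (S z - S x) + (J (S z) - J z) (S x - S z) := by
  have hx := (hS x).2 (S z) (hS z).1
  have hz := (hS z).2 (S x) (hS x).1
  have hmono := hA2 (S x) (hS x).1 (S z) (hS z).1
  have hsum : 0 ≤ (1 / r) * ((J (S x) - J x) (S z - S x) + (J (S z) - J z) (S x - S z)) := by
    linarith
  exact (mul_nonneg_iff_of_pos_left (by positivity)).1 hsum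

theorem equilibrium_resolvent_phi_inequality_general
    {E : Type*} [NormedAddCommGroup E] [NormedSpace ℝ E]
    (J : E → (E →L[ℝ] ℝ))
    (hJ1 : ∀ x : E, J x x = ‖x‖ ^ 2)
    (φ : E → E → ℝ)
    (hφ : ∀ x y : E, φ x y = ‖x‖ ^ 2 - 2 * (J y x) + ‖y‖ ^ 2)
    (C : Set E)
    (F : E → E → ℝ)
    (hA2 : ∀ x ∈ C, ∀ y ∈ C, F x y + F y x ≤ 0)
    (r : ℝ) (hr : 0 < r)
    (S : E → E)
    (hS : ∀ x : E, S x ∈ C ∧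
      ∀ y ∈ C, F (S x) y + (1 / r) * ((J (S x) - J x) (y - S x)) ≥ 0) :
    ∀ x : E, ∀ q : E, S q = q → φ q (S x) + φ (S x) x ≤ φ q x := by
  intro x q hq
  have hdual := resolvent_dual_pairing_sum_nonneg hA2 hr hS x q
  rw [hq, sub_self, zero_apply, add_zero] at hdual
  rw [phi_add_phi_eq_sub_two_mul hJ1 hφ]
  linarith

/-- For all `x ∈ E` and `q ∈ F(S_r)`: `φ(q, S_r x) + φ(S_r x, x) ≤ φ(q, x)`. -/
theorem equilibrium_resolvent_phi_inequality
    {E : Type*} [NormedAddCommGroup E] [NormedSpace ℝ E] [CompleteSpace E]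
    [StrictConvexSpace ℝ E]
    (hrefl : Function.Surjective (NormedSpace.inclusionInDoubleDual ℝ E))
    (J : E → (E →L[ℝ] ℝ))
    (hJ1 : ∀ x : E, J x x = ‖x‖ ^ 2)
    (hJ2 : ∀ x : E, ‖J x‖ = ‖x‖)
    (φ : E → E → ℝ)
    (hφ : ∀ x y : E, φ x y = ‖x‖ ^ 2 - 2 * (J y x) + ‖y‖ ^ 2)
    (C : Set E) (hC : C.Nonempty) (hCc : IsClosed C) (hCv : Convex ℝ C)
    (F : E → E → ℝ)
    (hA1 : ∀ x ∈ C, F x x = 0)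
    (hA2 : ∀ x ∈ C, ∀ y ∈ C, F x y + F y x ≤ 0)
    (hA3 : ∀ x ∈ C, ∀ y ∈ C, ∀ z ∈ C,
      Filter.limsup (fun t : ℝ => F (t • z + (1 - t) • x) y) (nhdsWithin 0 (Ioi 0))
        ≤ F x y)
    (hA4 : ∀ x ∈ C, ConvexOn ℝ C (F x) ∧ LowerSemicontinuousOn (F x) C)
    (r : ℝ) (hr : 0 < r)
    (S : E → E)
    (hS : ∀ x : E, S x ∈ C ∧
      ∀ y ∈ C, F (S x) y + (1 / r) * ((J (S x) - J x) (y - S x)) ≥ 0) :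
    ∀ x : E, ∀ q : E, S q = q → φ q (S x) + φ (S x) x ≤ φ q x :=
  equilibrium_resolvent_phi_inequality_general J hJ1 φ hφ C F hA2 r hr S hS
end

section
/- Let C be a nonempty closed convex subset of a real Hilbert space H and T : C → CB(C) a quasi-nonexpansive multivalued mapping (F(T) ≠ ∅ and H(Tx, Tp) ≤ ‖x − p‖ for all x ∈ C, p ∈ F(T)) such that Tp = {p} for every p ∈ F(T). Then F(T) is closed and convex. -/
open Set Metric

/-!
Quasi-nonexpansiveness together with `T p = {p}` says that every point of `T x` is at least as
close to each fixed point `p` as `x` is. For a fixed `x ∈ C` the points `p` with this property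
form a closed set, so a limit `x` of fixed points also has it with `p = x`, forcing `T x = {x}`.
If `z` lies on the segment between fixed points `p` and `q`, a point `y ∈ T z` satisfies
`dist y p + dist y q ≤ dist z p + dist z q = dist p q`; in a strictly convex space this pins
`y` down to `z`.
-/

theorem dist_le_of_hausdorffDist_singleton_le {α : Type*} [PseudoMetricSpace α] {A : Set α}
    {y p : α} {r : ℝ} (hA : Bornology.IsBounded A) (hy : y ∈ A)
    (h : hausdorffDist A {p} ≤ r) : dist y p ≤ r := by
  have hfin : hausdorffEDist A {p} ≠ ⊤ :=
    hausdorffEDist_ne_top_of_nonempty_of_bounded ⟨y, hy⟩ (singleton_nonempty p) hA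
      Bornology.isBounded_singleton
  simpa only [infDist_singleton] using (infDist_le_hausdorffDist_of_mem hy hfin).trans h

theorem mem_of_mem_closure_of_forall_dist_le {α : Type*} [MetricSpace α] {S F : Set α} {x : α}
    (hS : S.Nonempty) (hF : ∀ p ∈ F, ∀ y ∈ S, dist y p ≤ dist x p) (hx : x ∈ closure F) :
    x ∈ S := by
  have hclosed : IsClosed (⋂ y ∈ S, {p | dist y p ≤ dist x p}) :=
    isClosed_biInter fun y _ ↦
      isClosed_le (continuous_const.dist continuous_id) (continuous_const.dist continuous_id)
  obtain ⟨y, hy⟩ := hS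
  have hyx : dist y x ≤ dist x x :=
    mem_iInter₂.mp (closure_minimal (fun p hp ↦ mem_iInter₂.mpr (hF p hp)) hclosed hx) y hy
  rwa [← dist_le_zero.mp (hyx.trans_eq (dist_self x))]

theorem Wbtw.eq_of_dist_le_of_dist_le {V P : Type*} [NormedAddCommGroup V] [NormedSpace ℝ V]
    [StrictConvexSpace ℝ V] [MetricSpace P] [NormedAddTorsor V P] {p q y z : P}
    (hz : Wbtw ℝ p z q) (hyp : dist y p ≤ dist z p) (hyq : dist y q ≤ dist z q) : y = z := by
  obtain ⟨r, ⟨hr0, hr1⟩, rfl⟩ := hz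
  have hzp : dist (AffineMap.lineMap p q r) p = r * dist p q := by
    rw [dist_lineMap_left, Real.norm_of_nonneg hr0]
  have hzq : dist (AffineMap.lineMap p q r) q = (1 - r) * dist p q := by
    rw [dist_lineMap_right, Real.norm_of_nonneg (sub_nonneg.mpr hr1)]
  have htri : dist p q ≤ dist y p + dist y q := dist_triangle_left p q y
  apply eq_lineMap_of_dist_eq_mul_of_dist_eq_mul
  · rw [dist_comm]; linarith
  · linarith

theorem quasi_nonexpansive_fixedPointSet_closed_convex_general
    {H : Type*} [NormedAddCommGroup H] [InnerProductSpace ℝ H]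
    (C : Set H) (hCc : IsClosed C) (hCv : Convex ℝ C)
    (T : H → Set H)
    (hTval : ∀ x ∈ C, (T x).Nonempty ∧ T x ⊆ C ∧ IsClosed (T x) ∧
      Bornology.IsBounded (T x))
    (hqn : ∀ x ∈ C, ∀ p ∈ {x ∈ C | x ∈ T x},
      hausdorffDist (T x) (T p) ≤ ‖x - p‖)
    (hTp : ∀ p ∈ {x ∈ C | x ∈ T x}, T p = {p}) :
    IsClosed {x ∈ C | x ∈ T x} ∧ Convex ℝ {x ∈ C | x ∈ T x} := by
  have hdist : ∀ x ∈ C, ∀ p ∈ {x ∈ C | x ∈ T x}, ∀ y ∈ T x, dist y p ≤ dist x p :=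
    fun x hx p hp y hy ↦ dist_le_of_hausdorffDist_singleton_le (hTval x hx).2.2.2 hy <| by
      simpa only [hTp p hp, dist_eq_norm] using hqn x hx p hp
  constructor
  · refine isClosed_of_closure_subset fun x hx ↦ ?_
    have hxC : x ∈ C := hCc.closure_subset (closure_mono (sep_subset C _) hx)
    exact ⟨hxC, mem_of_mem_closure_of_forall_dist_le (hTval x hxC).1
      (fun p hp ↦ hdist x hxC p hp) hx⟩
  · refine convex_iff_segment_subset.mpr fun p hp q hq z hz ↦ ?_
    have hzC : z ∈ C := hCv.segment_subset hp.1 hq.1 hz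
    obtain ⟨y, hy⟩ := (hTval z hzC).1
    have hyz : y = z := (mem_segment_iff_wbtw.mp hz).eq_of_dist_le_of_dist_le
      (hdist z hzC p hp y hy) (hdist z hzC q hq y hy)
    exact ⟨hzC, hyz ▸ hy⟩

/-- For a quasi-nonexpansive multivalued mapping `T` on a closed convex subset
`C` of a real Hilbert space with `Tp = {p}` for every fixed point `p`, the
fixed point set `F(T)` is closed and convex. -/
theorem quasi_nonexpansive_fixedPointSet_closed_convex
    {H : Type*} [NormedAddCommGroup H] [InnerProductSpace ℝ H] [CompleteSpace H]
    (C : Set H) (hC : C.Nonempty) (hCc : IsClosed C) (hCv : Convex ℝ C)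
    (T : H → Set H)
    (hTval : ∀ x ∈ C, (T x).Nonempty ∧ T x ⊆ C ∧ IsClosed (T x) ∧
      Bornology.IsBounded (T x))
    (hFix : {x ∈ C | x ∈ T x}.Nonempty)
    (hqn : ∀ x ∈ C, ∀ p ∈ {x ∈ C | x ∈ T x},
      hausdorffDist (T x) (T p) ≤ ‖x - p‖)
    (hTp : ∀ p ∈ {x ∈ C | x ∈ T x}, T p = {p}) :
    IsClosed {x ∈ C | x ∈ T x} ∧ Convex ℝ {x ∈ C | x ∈ T x} :=
  quasi_nonexpansive_fixedPointSet_closed_convex_general C hCc hCv T hTval hqn hTp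
end
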